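/- The folding dynamical system (X, G) is indecomposable: there do not exist subsets A, B of X = 𝔠_N × ⟦−N,N⟧^ℕ, both closed for the metric d, both nonempty, both different from X, with A ∪ B = X, G(A) ⊆ A, and G(B) ⊆ B. -/

import Mathlib

/-!
A fold `f_k` is undone by `f_{-k}`, so a word of folds followed by its reversed negation acts
trivially on conformations. Concatenating such self-cancelling blocks, one for every finite word
of folds in `⟦−N,N⟧`, gives a single folding sequence `F*`. Given `(C, F)` in the phase space,
with `C` reached from the straight conformation by a word `L`, the block of the word
`L ++ (F 0, …, F (m-1))` shows that the orbit of `((0,…,0), F*)` passes within `10⁻ᵐ` of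
`(C, F)`: all earlier blocks act trivially. So this orbit is dense, and a closed `G`-invariant
subset of the phase space containing its starting point is the whole space; one of `A`, `B`
contains that point.
-/

open scoped BigOperators

namespace HP

/-- A conformation of `N+1` residues in absolute encoding
(the initial residue, always `0`, is omitted): `C k` is the paper's `C_{k+1}`. -/
abbrev Conf (N : ℕ) := Fin N → ZMod 4

open Classical in
/-- `δ(a,b) = 0` if `a = b`, `1` otherwise. -/
noncomputable def delta {α : Type*} (a b : α) : ℝ := if a = b then 0 else 1

/-- `d_C(C,Č) = Σ_{k=1}^N δ(C_k,Č_k)·2^{N−k}`. -/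
noncomputable def dC (N : ℕ) (C C' : Conf N) : ℝ :=
  ∑ k : Fin N, delta (C k) (C' k) * (2 : ℝ) ^ (N - 1 - (k : ℕ))

/-- `d_F(F,F̌) = (9/(2N))·Σ_{k=0}^∞ |F^k − F̌^k|/10^{k+1}`. -/
noncomputable def dF (N : ℕ) (F F' : ℕ → ℤ) : ℝ :=
  (9 / (2 * (N : ℝ))) * ∑' k : ℕ, |((F k : ℝ)) - ((F' k : ℝ))| / 10 ^ (k + 1)

/-- `d((C,F),(Č,F̌)) = d_C(C,Č) + d_F(F,F̌)`. -/
noncomputable def distX (N : ℕ) (X Y : Conf N × (ℕ → ℤ)) : ℝ :=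
  dC N X.1 Y.1 + dF N X.2 Y.2

/-- A folding sequence takes values in `⟦−N,N⟧`. -/
def validSeq (N : ℕ) (F : ℕ → ℤ) : Prop := ∀ k, |F k| ≤ (N : ℤ)

/-- The fold map `f_k`: residues with (paper) index `≥ |k|` are rotated by
`f^{sign k}` where `f x = x + 1` (in `ℤ/4ℤ`); `f_0 = id`. -/
def foldMap (N : ℕ) (k : ℤ) (C : Conf N) : Conf N :=
  fun j => if ((j : ℕ) : ℤ) + 1 < |k| then C j else C j + (Int.sign k : ZMod 4)

/-- The folding dynamics `G(C,F) = (f_{i(F)}(C), σ(F))`. -/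
def G (N : ℕ) : Conf N × (ℕ → ℤ) → Conf N × (ℕ → ℤ) :=
  fun X => (foldMap N (X.2 0) X.1, fun n => X.2 (n + 1))

/-- The shift `σ` on folding sequences. -/
def shiftF (F : ℕ → ℤ) : ℕ → ℤ := fun k => F (k + 1)

/-- Unit move in the 2D lattice associated with an absolute encoding letter. -/
def step (c : ZMod 4) : ℤ × ℤ :=
  if c = 0 then (1, 0) else if c = 1 then (0, -1) else if c = 2 then (-1, 0) else (0, 1)

/-- `pos N C i` is the lattice point `X_i` of the 2D representation `p(C)`. -/
def pos (N : ℕ) (C : Conf N) : ℕ → ℤ × ℤ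
  | 0 => (0, 0)
  | i + 1 => pos N C i + (if h : i < N then step (C ⟨i, h⟩) else 0)

/-- The SAW requirement: the lattice points `X_0, …, X_N` are pairwise distinct. -/
def SAW (N : ℕ) (C : Conf N) : Prop :=
  ∀ i j : ℕ, i ≤ N → j ≤ N → pos N C i = pos N C j → i = j

/-- Successive application of fold maps `f_{k_1}, …, f_{k_n}`. -/
def folds (N : ℕ) : Conf N → List ℤ → Conf N
  | C, [] => C
  | C, k :: t => folds N (foldMap N k C) t

/-- The set `𝔠_N` of acceptable conformations: obtained from `(0,…,0)` by a
nonempty sequence of folds in `⟦−N,N⟧`, all intermediate conformations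
(including the initial and final ones) satisfying the SAW requirement. -/
def acceptable (N : ℕ) (C : Conf N) : Prop :=
  ∃ L : List ℤ, L ≠ [] ∧ (∀ k ∈ L, |k| ≤ (N : ℤ)) ∧
    folds N (fun _ => 0) L = C ∧
    ∀ p : List ℤ, p <+: L → SAW N (folds N (fun _ => 0) p)

/-- Membership in the phase space `X = 𝔠_N × ⟦−N,N⟧^ℕ`. -/
def inX (N : ℕ) (X : Conf N × (ℕ → ℤ)) : Prop :=
  acceptable N X.1 ∧ validSeq N X.2

/-- `U` is open in the metric space `(X, d)` (relative topology on `𝔠_N × ⟦−N,N⟧^ℕ`). -/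
def openIn (N : ℕ) (U : Set (Conf N × (ℕ → ℤ))) : Prop :=
  ∀ x ∈ U, ∃ ε > (0 : ℝ), ∀ y, inX N y → distX N x y < ε → y ∈ U

/-- `A` is closed in the metric space `(X, d)` (relative topology). -/
def closedIn (N : ℕ) (A : Set (Conf N × (ℕ → ℤ))) : Prop :=
  ∀ x, inX N x → x ∉ A → ∃ ε > (0 : ℝ), ∀ y, inX N y → distX N x y < ε → y ∉ A

lemma foldMap_zero (N : ℕ) (C : Conf N) : foldMap N 0 C = C := by
  funext j; simp [foldMap]

lemma foldMap_neg_foldMap (N : ℕ) (k : ℤ) (C : Conf N) :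
    foldMap N (-k) (foldMap N k C) = C := by
  funext j
  by_cases h : ((j : ℕ) : ℤ) + 1 < |k| <;> simp [foldMap, h]

lemma folds_append (N : ℕ) (C : Conf N) (l l' : List ℤ) :
    folds N C (l ++ l') = folds N (folds N C l) l' := by
  induction l generalizing C with
  | nil => rfl
  | cons k l ih => exact ih _

lemma folds_eq_self_of_forall_mem_eq_zero (N : ℕ) (C : Conf N) {l : List ℤ}
    (hl : ∀ k ∈ l, k = 0) : folds N C l = C := by
  induction l generalizing C with
  | nil => rfl
  | cons k l ih =>
    rw [folds, hl k List.mem_cons_self, foldMap_zero]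
    exact ih C fun j hj => hl j (List.mem_cons_of_mem k hj)

def undoFolds (l : List ℤ) : List ℤ := (l.map Neg.neg).reverse

lemma folds_undoFolds (N : ℕ) (C : Conf N) (l : List ℤ) :
    folds N (folds N C l) (undoFolds l) = C := by
  induction l generalizing C with
  | nil => rfl
  | cons k l ih =>
    rw [undoFolds, List.map_cons, List.reverse_cons, folds_append, ← undoFolds]
    exact (congrArg (foldMap N (-k)) (ih _)).trans (foldMap_neg_foldMap N k C)

section UniversalSequence

variable (N : ℕ)

def clampFold (k : ℤ) : ℤ := if |k| ≤ (N : ℤ) then k else 0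

lemma abs_clampFold_le (k : ℤ) : |clampFold N k| ≤ N := by
  unfold clampFold; split_ifs with h
  · exact h
  · simp

def foldWord (n : ℕ) : List ℤ := (Denumerable.ofNat (List ℤ) n).map (clampFold N)

lemma foldWord_encode {l : List ℤ} (hl : ∀ k ∈ l, |k| ≤ (N : ℤ)) :
    foldWord N (Encodable.encode l) = l := by
  rw [foldWord, Denumerable.ofNat_encode]
  exact (List.map_congr_left fun k hk => if_pos (hl k hk)).trans (List.map_id l)

/-- The padding `0` keeps blocks nonempty, so that `foldBlocks N n` has length at least `n`. -/
def foldBlock (n : ℕ) : List ℤ := foldWord N n ++ undoFolds (foldWord N n) ++ [0]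

def foldBlocks : ℕ → List ℤ
  | 0 => []
  | n + 1 => foldBlocks n ++ foldBlock N n

/-- The infinite concatenation `foldBlock N 0 ++ foldBlock N 1 ++ ⋯`, read off the finite
prefix `foldBlocks N (k + 1)`, which is already longer than `k`. -/
def universalSeq (k : ℕ) : ℤ := (foldBlocks N (k + 1)).getD k 0

lemma folds_foldBlocks (C : Conf N) (n : ℕ) : folds N C (foldBlocks N n) = C := by
  induction n with
  | zero => rfl
  | succ n ih =>
    rw [foldBlocks, foldBlock, folds_append, folds_append, folds_append, ih,
      folds_undoFolds]
    exact foldMap_zero N C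

lemma abs_le_of_mem_foldBlocks {n : ℕ} {k : ℤ} (hk : k ∈ foldBlocks N n) : |k| ≤ N := by
  have hword : ∀ {n} {k : ℤ}, k ∈ foldWord N n → |k| ≤ N := fun hk => by
    obtain ⟨j, -, rfl⟩ := List.mem_map.1 hk
    exact abs_clampFold_le N j
  induction n with
  | zero => simp [foldBlocks] at hk
  | succ n ih =>
    simp only [foldBlocks, foldBlock, undoFolds, List.mem_append, List.mem_reverse,
      List.mem_map, List.mem_singleton] at hk
    rcases hk with hk | (hk | ⟨j, hj, rfl⟩) | rfl
    · exact ih hk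
    · exact hword hk
    · exact (abs_neg j).trans_le (hword hj)
    · simp

lemma le_length_foldBlocks (n : ℕ) : n ≤ (foldBlocks N n).length := by
  induction n with
  | zero => exact Nat.zero_le _
  | succ n ih =>
    simp only [foldBlocks, foldBlock, List.length_append, List.length_singleton]
    omega

lemma foldBlocks_prefix_foldBlocks {m n : ℕ} (h : m ≤ n) : foldBlocks N m <+: foldBlocks N n := by
  induction n, h using Nat.le_induction with
  | base => exact List.prefix_refl _
  | succ n _ ih => exact ih.trans (List.prefix_append _ _)

lemma universalSeq_eq_getElem {M k : ℕ} (hk : k < (foldBlocks N M).length) :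
    universalSeq N k = (foldBlocks N M)[k] := by
  have hk' : k < (foldBlocks N (k + 1)).length := le_length_foldBlocks N (k + 1)
  rw [universalSeq, List.getD_eq_getElem _ _ hk',
    (foldBlocks_prefix_foldBlocks N (le_max_left (k + 1) M)).getElem hk',
    (foldBlocks_prefix_foldBlocks N (le_max_right (k + 1) M)).getElem hk]

lemma map_range_universalSeq_of_prefix {l : List ℤ} {M : ℕ} (h : l <+: foldBlocks N M) :
    (List.range l.length).map (universalSeq N) = l := by
  refine List.ext_getElem (by simp) fun k hk hk' => ?_
  rw [List.getElem_map, List.getElem_range, h.getElem hk',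
    universalSeq_eq_getElem N (lt_of_lt_of_le hk' h.length_le)]

lemma validSeq_universalSeq : validSeq N (universalSeq N) := by
  intro k
  have hk : k < (foldBlocks N (k + 1)).length := le_length_foldBlocks N (k + 1)
  rw [universalSeq, List.getD_eq_getElem _ _ hk]
  exact abs_le_of_mem_foldBlocks N (List.getElem_mem hk)

end UniversalSequence

lemma iterate_G (N t : ℕ) (C : Conf N) (F : ℕ → ℤ) :
    (G N)^[t] (C, F) = (folds N C ((List.range t).map F), fun n => F (t + n)) := by
  induction t generalizing C F with
  | zero => simp [folds]
  | succ t ih =>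
    rw [Function.iterate_succ_apply, G, ih, List.range_succ_eq_map, List.map_cons,
      List.map_map]
    simp only [folds, Function.comp_def, Nat.succ_eq_add_one]
    exact Prod.ext rfl (funext fun n => congrArg F (by omega))

lemma tsum_div_ten_pow_le {f : ℕ → ℝ} {c : ℝ} {m : ℕ} (hf : ∀ k, 0 ≤ f k) (hfc : ∀ k, f k ≤ c)
    (hm : ∀ k < m, f k = 0) : ∑' k, f k / 10 ^ (k + 1) ≤ c / 9 / 10 ^ m := by
  have hgeom : Summable fun k : ℕ => (10 : ℝ)⁻¹ ^ k :=
    summable_geometric_of_lt_one (by norm_num) (by norm_num)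
  have hterm : ∀ k, f k / 10 ^ (k + 1) ≤ c / 10 * (10 : ℝ)⁻¹ ^ k := fun k =>
    calc f k / 10 ^ (k + 1) = f k / 10 * (10 : ℝ)⁻¹ ^ k := by rw [inv_pow, pow_succ]; ring
      _ ≤ c / 10 * (10 : ℝ)⁻¹ ^ k := by gcongr; exact hfc k
  have hsum : Summable fun k => f k / 10 ^ (k + 1) :=
    (hgeom.mul_left _).of_nonneg_of_le (fun k => by have := hf k; positivity) hterm
  rw [← hsum.sum_add_tsum_nat_add m, Finset.sum_eq_zero fun k hk => by
    rw [hm k (Finset.mem_range.1 hk), zero_div], zero_add]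
  calc ∑' k, f (k + m) / 10 ^ (k + m + 1)
      ≤ ∑' k, c / 10 / 10 ^ m * (10 : ℝ)⁻¹ ^ k :=
        ((summable_nat_add_iff m).2 hsum).tsum_le_tsum
          (fun k => (hterm (k + m)).trans_eq (by rw [pow_add, inv_pow, inv_pow]; field_simp))
          (hgeom.mul_left _)
    _ = c / 9 / 10 ^ m := by
        rw [tsum_mul_left, tsum_geometric_of_lt_one (by norm_num) (by norm_num)]
        ring

lemma dF_le_of_forall_lt_eq (N : ℕ) {F F' : ℕ → ℤ} (hF : validSeq N F) (hF' : validSeq N F')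
    {m : ℕ} (hm : ∀ k < m, F k = F' k) : dF N F F' ≤ 1 / 10 ^ m := by
  have hdiff : ∀ k, |(F k : ℝ) - F' k| ≤ 2 * N := fun k => by
    have h := (abs_sub (F k) (F' k)).trans (add_le_add (hF k) (hF' k))
    exact_mod_cast (two_mul (N : ℤ)).symm ▸ h
  calc dF N F F' ≤ 9 / (2 * N) * (2 * N / 9 / 10 ^ m) :=
        mul_le_mul_of_nonneg_left (tsum_div_ten_pow_le (fun _ => abs_nonneg _) hdiff
          fun k hk => by rw [hm k hk, sub_self, abs_zero]) (by positivity)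
    _ = (2 * N) / (2 * N) * (1 / 10 ^ m) := by ring
    _ ≤ 1 / 10 ^ m := mul_le_of_le_one_left (by positivity) (div_self_le_one _)

lemma dC_self (N : ℕ) (C : Conf N) : dC N C C = 0 := by
  simp [dC, delta]

lemma pos_zero {N i : ℕ} (hi : i ≤ N) : pos N (fun _ => 0) i = ((i : ℤ), 0) := by
  induction i with
  | zero => rfl
  | succ i ih =>
    rw [pos, ih (by omega), dif_pos (by omega)]
    simp [step]

lemma SAW_zero (N : ℕ) : SAW N (fun _ => 0) := by
  intro i j hi hj h
  rw [pos_zero hi, pos_zero hj] at h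
  exact_mod_cast (Prod.mk.inj h).1

lemma acceptable_zero (N : ℕ) : acceptable N (fun _ => 0) := by
  have hzero : ∀ p : List ℤ, p <+: [0] → folds N (fun _ => 0) p = fun _ => 0 :=
    fun p hp => folds_eq_self_of_forall_mem_eq_zero N _ fun k hk =>
      List.mem_singleton.1 (hp.subset hk)
  refine ⟨[0], List.cons_ne_nil _ _, by simp, hzero _ (List.prefix_refl _), fun p hp => ?_⟩
  rw [hzero p hp]
  exact SAW_zero N

def universalPoint (N : ℕ) : Conf N × (ℕ → ℤ) := (fun _ => 0, universalSeq N)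

lemma inX_universalPoint (N : ℕ) : inX N (universalPoint N) :=
  ⟨acceptable_zero N, validSeq_universalSeq N⟩

lemma exists_iterate_universalPoint_near (N : ℕ) {y : Conf N × (ℕ → ℤ)} (hy : inX N y)
    {ε : ℝ} (hε : 0 < ε) :
    ∃ t, inX N ((G N)^[t] (universalPoint N)) ∧ distX N y ((G N)^[t] (universalPoint N)) < ε := by
  obtain ⟨C, F⟩ := y
  obtain ⟨hC, hF⟩ := hy
  obtain ⟨L, -, hLN, hLC, -⟩ := id hC
  obtain ⟨m, hm⟩ := exists_pow_lt_of_lt_one hε (show (1 / 10 : ℝ) < 1 by norm_num)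
  -- The block with index `n` first folds the straight conformation to `C`, then reads `F` up
  -- to time `m`.
  set w := (List.range m).map F
  set n := Encodable.encode (L ++ w)
  set t := (foldBlocks N n ++ L).length
  have hword : foldWord N n = L ++ w := foldWord_encode N fun k hk => by
    rcases List.mem_append.1 hk with hk | hk
    · exact hLN k hk
    · obtain ⟨j, -, rfl⟩ := List.mem_map.1 hk
      exact hF j
  have hprefix : foldBlocks N n ++ L ++ w <+: foldBlocks N (n + 1) := by
    rw [foldBlocks, foldBlock, hword]
    exact ⟨undoFolds (L ++ w) ++ [0], by simp⟩
  have hsplit := map_range_universalSeq_of_prefix N hprefix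
  rw [List.length_append, List.length_map, List.length_range, List.range_add, List.map_append,
    List.map_map] at hsplit
  obtain ⟨hhead, htail⟩ := List.append_inj hsplit (by simp)
  have hfold : folds N (fun _ => 0) ((List.range t).map (universalSeq N)) = C := by
    rw [hhead, folds_append, folds_foldBlocks, hLC]
  have hagree : ∀ k < m, F k = universalSeq N (t + k) := fun k hk => by
    have h := congrArg (·[k]?) htail.symm
    simp only [w, List.getElem?_map, List.getElem?_range hk, Option.map_some,
      Option.some.injEq] at h
    exact h
  refine ⟨t, ?_, ?_⟩ <;> rw [universalPoint, iterate_G, hfold]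
  · exact ⟨hC, fun k => validSeq_universalSeq N (t + k)⟩
  · calc distX N (C, F) (C, fun k => universalSeq N (t + k))
        = dF N F fun k => universalSeq N (t + k) := by rw [distX, dC_self, zero_add]
      _ ≤ 1 / 10 ^ m := dF_le_of_forall_lt_eq N hF (fun k => validSeq_universalSeq N _) hagree
      _ < ε := by rwa [← one_div_pow]

lemma eq_of_closedIn_of_universalPoint_mem (N : ℕ) {S : Set (Conf N × (ℕ → ℤ))}
    (hS : closedIn N S) (hSX : S ⊆ {x | inX N x}) (hSG : ∀ x ∈ S, G N x ∈ S)
    (hS0 : universalPoint N ∈ S) : S = {x | inX N x} := by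
  refine hSX.antisymm fun y hy => by_contra fun hyS => ?_
  obtain ⟨ε, hε, hball⟩ := hS y hy hyS
  obtain ⟨t, htX, hty⟩ := exists_iterate_universalPoint_near N hy hε
  exact hball _ htX hty (Set.MapsTo.iterate hSG t hS0)

theorem G_indecomposable_general (N : ℕ) :
    ¬ ∃ A B : Set (Conf N × (ℕ → ℤ)),
        A ⊆ {x | inX N x} ∧ B ⊆ {x | inX N x} ∧
        closedIn N A ∧ closedIn N B ∧
        A.Nonempty ∧ B.Nonempty ∧
        A ≠ {x | inX N x} ∧ B ≠ {x | inX N x} ∧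
        A ∪ B = {x | inX N x} ∧
        (∀ x ∈ A, G N x ∈ A) ∧ (∀ x ∈ B, G N x ∈ B) := by
  rintro ⟨A, B, hAX, hBX, hA, hB, -, -, hAne, hBne, hAB, hAG, hBG⟩
  have h0 : universalPoint N ∈ A ∪ B := hAB ▸ inX_universalPoint N
  rcases h0 with h0 | h0
  · exact hAne (eq_of_closedIn_of_universalPoint_mem N hA hAX hAG h0)
  · exact hBne (eq_of_closedIn_of_universalPoint_mem N hB hBX hBG h0)

/-- the folding dynamical system `(X, G)` is indecomposable:
`X` is not the union of two nonempty proper closed `G`-invariant subsets. -/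
theorem G_indecomposable (N : ℕ) (hN : 1 ≤ N) :
    ¬ ∃ A B : Set (Conf N × (ℕ → ℤ)),
        A ⊆ {x | inX N x} ∧ B ⊆ {x | inX N x} ∧
        closedIn N A ∧ closedIn N B ∧
        A.Nonempty ∧ B.Nonempty ∧
        A ≠ {x | inX N x} ∧ B ≠ {x | inX N x} ∧
        A ∪ B = {x | inX N x} ∧
        (∀ x ∈ A, G N x ∈ A) ∧ (∀ x ∈ B, G N x ∈ B) :=
  G_indecomposable_general N

end HP
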